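/- arXiv:1902.04831 — 9 statements merged into one kernel-verified Lean document; each statement's English description precedes it below -/
import Mathlib

section
/- Let f : X ⟶ Y be a morphism of schemes. Suppose there exists an open cover of Y by affine open subschemes V_i and, for each i, an open cover of f⁻¹(V_i) by affine open subschemes U_{i,j}, such that O_X(U_{i,j}) is an O_Y(V_i)-algebra of finite expansion for all i, j. Then for every affine open subscheme V ⊆ Y and every affine open subscheme U ⊆ f⁻¹(V), the ring O_X(U) is an O_Y(V)-algebra of finite expansion. -/
open AlgebraicGeometry CategoryTheory

/-- An `R`-algebra `A` is of *finite expansion* if it is integral over a finitely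
generated subalgebra, i.e. there is a finite set of quasi-generators. -/
def Algebra.FiniteExpansion (R A : Type*) [CommRing R] [CommRing A] [Algebra R A] : Prop :=
  ∃ s : Finset A, Algebra.IsIntegral (Algebra.adjoin R (s : Set A)) A

/-- A ring homomorphism is of finite expansion if it makes the target an algebra of finite
expansion over the source. -/
def RingHom.FiniteExpansion {R A : Type*} [CommRing R] [CommRing A] (f : R →+* A) : Prop :=
  @Algebra.FiniteExpansion R A _ _ f.toAlgebra

/-- A morphism of schemes is of finite expansion if it is quasi-compact and the induced ring
maps on all compatible pairs of affine opens are of finite expansion. -/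
def AlgebraicGeometry.Scheme.Hom.FiniteExpansion {X Y : Scheme} (f : X.Hom Y) : Prop :=
  QuasiCompact f ∧ ∀ (V : Y.affineOpens) (U : X.affineOpens) (e : U.1 ≤ f ⁻¹ᵁ V.1),
    (f.appLE V U e).hom.FiniteExpansion

/-!
Finite expansion of ring maps is a local property in the sense of `RingHom.PropertyIsLocal`.
It is stable under composition (by transitivity of integrality) and holds for `R → R[1/r]`,
which gives stability under localization. For descent along a finite cover `S[1/r]` of the
target, adjoin the `r`, the coefficients of a relation `∑ c r * r = 1` and the numerators of
quasi-generators of each `S[1/r]`: the resulting subring `B` becomes integral after inverting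
each `r`, and the `r` still generate the unit ideal of `B`, so `S` is integral over `B`.
Hence `affineLocally` of finite expansion is a `HasRingHomProperty`, which can be checked on
any affine cover and then holds on every pair of affine opens.
-/

universe u

section

variable {R S T : Type*} [CommRing R] [CommRing S] [CommRing T]

theorem IsIntegral.map_subring (φ : S →+* T) {B : Subring S} {C : Subring T}
    (h : B ≤ C.comap φ) {x : S} (hx : IsIntegral B x) : IsIntegral C (φ x) :=
  hx.map_of_comp_eq (φ.restrict B C h) φ rfl

theorem IsIntegral.subring_mono {B C : Subring T} (h : B ≤ C) {x : T} (hx : IsIntegral B x) :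
    IsIntegral C x :=
  hx.map_subring (RingHom.id T) h

theorem Subring.isIntegral_of_mem {B : Subring T} {x : T} (hx : x ∈ B) : IsIntegral B x :=
  isIntegral_algebraMap (x := (⟨x, hx⟩ : B))

theorem IsIntegral.trans_subring [Algebra R T] {C : Subring T}
    (hC : ∀ y ∈ C, IsIntegral R y) {x : T} (hx : IsIntegral C x) : IsIntegral R x :=
  isIntegral_trans (A := integralClosure R T) x <|
    hx.map_of_comp_eq (Subring.inclusion (S := C) (T := (integralClosure R T).toSubring) hC)
      (RingHom.id T) rfl

theorem RingHom.isIntegralElem_of_isIntegral_range (g : S →+* T) {x : T}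
    (hx : _root_.IsIntegral g.range x) : g.IsIntegralElem x :=
  letI := g.toAlgebra
  hx.trans_subring (R := S) <| by
    rintro _ ⟨a, rfl⟩
    exact isIntegral_algebraMap

theorem IsLocalization.Away.exists_eq_algebraMap_mul_invSelf_pow [Algebra S T] (r : S)
    [IsLocalization.Away r T] (z : T) :
    ∃ (a : S) (n : ℕ), z = algebraMap S T a * IsLocalization.Away.invSelf r ^ n := by
  obtain ⟨n, a, hz⟩ := IsLocalization.Away.surj r z
  refine ⟨a, n, ?_⟩
  rw [← hz, mul_assoc, ← mul_pow, IsLocalization.Away.mul_invSelf, one_pow, mul_one]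

theorem Localization.awayMap_invSelf (f : R →+* S) (r : R) :
    Localization.awayMap f r (IsLocalization.Away.invSelf r) =
      IsLocalization.Away.invSelf (f r) := by
  simp [IsLocalization.Away.invSelf, Localization.awayMap, IsLocalization.Away.map,
    IsLocalization.map_mk']

theorem Subring.span_preimage_coe_eq_top {B : Subring S} {s : Finset S} {c : S → S}
    (hs : ∀ r ∈ s, r ∈ B ∧ c r ∈ B) (hc : ∑ r ∈ s, c r * r = 1) :
    Ideal.span ((↑) ⁻¹' (s : Set S) : Set B) = ⊤ := by
  rw [Ideal.eq_top_iff_one]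
  have hone : (1 : B) = ∑ r ∈ s.attach, ⟨c r, (hs r r.2).2⟩ * ⟨r, (hs r r.2).1⟩ := by
    apply Subtype.ext
    push_cast
    rw [Finset.sum_attach s (fun r => c r * r), hc]
  rw [hone]
  exact Ideal.sum_mem _ fun r _ => Ideal.mul_mem_left _ _ (Ideal.subset_span r.2)

theorem Subring.isIntegral_of_span_eq_top {B : Subring S} (s : Set B) (hs : Ideal.span s = ⊤)
    (h : ∀ r ∈ s, ∀ z : Localization.Away (r : S), IsIntegral
      (Subring.closure (algebraMap S (Localization.Away (r : S)) '' B ∪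
        {IsLocalization.Away.invSelf (r : S)})) z)
    (x : S) : IsIntegral B x := by
  refine RingHom.isIntegral_ofLocalizationSpan B.subtype s hs (fun ⟨r, hr⟩ z => ?_) x
  refine RingHom.isIntegralElem_of_isIntegral_range _
    ((h r hr z).subring_mono (Subring.closure_le.mpr ?_))
  rintro _ (⟨b, hb, rfl⟩ | rfl)
  · exact ⟨algebraMap B _ ⟨b, hb⟩, IsLocalization.map_eq _ _⟩
  · exact ⟨_, Localization.awayMap_invSelf B.subtype r⟩

end

namespace RingHom

variable {R S T : Type*} [CommRing R] [CommRing S] [CommRing T]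

theorem finiteExpansion_iff (f : R →+* S) :
    f.FiniteExpansion ↔
      ∃ u : Set S, u.Finite ∧
        ∀ x : S, _root_.IsIntegral (Subring.closure (Set.range f ∪ u)) x := by
  let := f.toAlgebra
  have hclosure (u : Set S) :
      Subring.closure (Set.range f ∪ u) = (Algebra.adjoin R u).toSubring := by
    rw [Algebra.adjoin_eq_ring_closure]; rfl
  constructor
  · rintro ⟨s, hs⟩
    exact ⟨s, s.finite_toSet, fun x => hclosure s ▸ hs.isIntegral x⟩
  · rintro ⟨u, hu, h⟩
    refine ⟨hu.toFinset, ⟨fun x => ?_⟩⟩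
    have := h x
    rwa [← hu.coe_toFinset, hclosure] at this

theorem FiniteExpansion.comp {f : R →+* S} {g : S →+* T} (hg : g.FiniteExpansion)
    (hf : f.FiniteExpansion) : (g.comp f).FiniteExpansion := by
  rw [finiteExpansion_iff] at *
  obtain ⟨u, hu, hfu⟩ := hf
  obtain ⟨v, hv, hgv⟩ := hg
  refine ⟨g '' u ∪ v, (hu.image g).union hv, fun x => ?_⟩
  set D := Subring.closure (Set.range (g.comp f) ∪ (g '' u ∪ v))
  have hg_int (y : S) : _root_.IsIntegral D (g y) := by
    refine (hfu y).map_subring g (Subring.closure_le.mpr ?_)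
    rintro _ (⟨a, rfl⟩ | ha)
    · exact Subring.subset_closure (Or.inl ⟨a, rfl⟩)
    · exact Subring.subset_closure (Or.inr (Or.inl ⟨_, ha, rfl⟩))
  refine (hgv x).trans_subring fun y hy => ?_
  refine (Subring.closure_le (t := (integralClosure D T).toSubring)).mpr ?_ hy
  rintro _ (⟨a, rfl⟩ | ha)
  · exact hg_int a
  · exact Subring.isIntegral_of_mem (Subring.subset_closure (Or.inr (Or.inr ha)))

theorem FiniteExpansion.of_comp {f : R →+* S} {g : S →+* T} (h : (g.comp f).FiniteExpansion) :
    g.FiniteExpansion := by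
  rw [finiteExpansion_iff] at *
  obtain ⟨u, hu, hint⟩ := h
  refine ⟨u, hu, fun x => (hint x).subring_mono (Subring.closure_mono ?_)⟩
  exact Set.union_subset_union_left u (Set.range_comp_subset_range f g)

theorem finiteExpansion_holdsForLocalizationAway :
    HoldsForLocalizationAway @FiniteExpansion := by
  intro R S _ _ _ r _
  rw [finiteExpansion_iff]
  refine ⟨{IsLocalization.Away.invSelf r}, Set.finite_singleton _, fun z => ?_⟩
  refine Subring.isIntegral_of_mem ?_
  obtain ⟨a, n, rfl⟩ := IsLocalization.Away.exists_eq_algebraMap_mul_invSelf_pow r z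
  exact mul_mem (Subring.subset_closure (Or.inl ⟨a, rfl⟩))
    (pow_mem (Subring.subset_closure (Set.mem_union_right _ (Set.mem_singleton _))) n)

theorem finiteExpansion_stableUnderComposition :
    StableUnderComposition @FiniteExpansion :=
  fun _ _ _ _ _ _ _ _ hf hg => hg.comp hf

theorem finiteExpansion_localizationAwayPreserves :
    LocalizationAwayPreserves @FiniteExpansion := by
  introv R hf
  have hcomm : (IsLocalization.Away.map R' S' f r).comp (algebraMap R R') =
      (algebraMap S S').comp f := IsLocalization.map_comp _
  refine FiniteExpansion.of_comp (f := algebraMap R R') ?_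
  rw [hcomm]
  exact (finiteExpansion_holdsForLocalizationAway S' (f r)).comp hf

theorem finiteExpansion_ofLocalizationSpanTarget :
    OfLocalizationSpanTarget @FiniteExpansion := by
  rw [ofLocalizationSpanTarget_iff_finite]
  intro R S _ _ f s hs H
  simp only [finiteExpansion_iff] at H ⊢
  choose u hu hint using H
  choose num pow hnum using fun (r : s) (y : Localization.Away (r : S)) =>
    IsLocalization.Away.exists_eq_algebraMap_mul_invSelf_pow (r : S) y
  obtain ⟨c, -, hc⟩ := Submodule.mem_span_finset.mp
    (show (1 : S) ∈ Ideal.span (s : Set S) by rw [hs]; trivial)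
  let v : Set S := s ∪ c '' s ∪ ⋃ r : s, num r '' u r
  refine ⟨v, ((s.finite_toSet.union (s.finite_toSet.image c)).union
    (Set.finite_iUnion fun r => (hu r).image _)), ?_⟩
  set B := Subring.closure (Set.range f ∪ v)
  have hsB (r) (hr : r ∈ s) : r ∈ B ∧ c r ∈ B :=
    ⟨Subring.subset_closure (Or.inr (Or.inl (Or.inl hr))),
      Subring.subset_closure (Or.inr (Or.inl (Or.inr ⟨r, hr, rfl⟩)))⟩
  refine Subring.isIntegral_of_span_eq_top _
    (Subring.span_preimage_coe_eq_top hsB (by simpa only [smul_eq_mul] using hc)) ?_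
  rintro ⟨r, -⟩ (hr : r ∈ s) z
  refine (hint ⟨r, hr⟩ z).subring_mono (Subring.closure_le.mpr ?_)
  rintro y (⟨a, rfl⟩ | hy)
  · exact Subring.subset_closure (Or.inl ⟨f a, Subring.subset_closure (Or.inl ⟨a, rfl⟩), rfl⟩)
  · rw [hnum ⟨r, hr⟩ y]
    refine mul_mem (Subring.subset_closure (Or.inl ⟨_, ?_, rfl⟩))
      (pow_mem (Subring.subset_closure (Set.mem_union_right _ (Set.mem_singleton _))) _)
    exact Subring.subset_closure (Or.inr (Or.inr (Set.mem_iUnion.mpr ⟨⟨r, hr⟩, _, hy, rfl⟩)))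

theorem finiteExpansion_stableUnderCompositionWithLocalizationAway :
    StableUnderCompositionWithLocalizationAway @FiniteExpansion :=
  finiteExpansion_stableUnderComposition.stableUnderCompositionWithLocalizationAway
    finiteExpansion_holdsForLocalizationAway

theorem finiteExpansion_isLocal : PropertyIsLocal @FiniteExpansion :=
  ⟨finiteExpansion_localizationAwayPreserves, finiteExpansion_ofLocalizationSpanTarget,
    finiteExpansion_ofLocalizationSpanTarget.ofLocalizationSpan
      finiteExpansion_stableUnderCompositionWithLocalizationAway.left,
    finiteExpansion_stableUnderCompositionWithLocalizationAway.right⟩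

end RingHom

instance : HasRingHomProperty (affineLocally @RingHom.FiniteExpansion) @RingHom.FiniteExpansion :=
  ⟨RingHom.finiteExpansion_isLocal, rfl⟩

namespace AlgebraicGeometry.HasRingHomProperty

theorem of_iSup_affineOpens_eq_top {P : MorphismProperty Scheme.{u}}
    {Q : ∀ {R S : Type u} [CommRing R] [CommRing S], (R →+* S) → Prop} [HasRingHomProperty P Q]
    (hQ : RingHom.StableUnderCompositionWithLocalizationAwaySource Q)
    {X Y : Scheme.{u}} (f : X ⟶ Y) {ι : Type*} (V : ι → Y.affineOpens) (hV : ⨆ i, (V i).1 = ⊤)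
    {κ : ι → Type*} (U : ∀ i, κ i → X.affineOpens) (hle : ∀ i j, (U i j).1 ≤ f ⁻¹ᵁ (V i).1)
    (hU : ∀ i, ⨆ j, (U i j).1 = f ⁻¹ᵁ (V i).1)
    (H : ∀ i j, Q (f.appLE (V i) (U i j) (hle i j)).hom) : P f := by
  refine (iff_exists_appLE hQ).mpr fun x => ?_
  obtain ⟨i, hi⟩ := TopologicalSpace.Opens.mem_iSup.mp (hV ▸ trivial : f x ∈ ⨆ i, (V i).1)
  obtain ⟨j, hj⟩ := TopologicalSpace.Opens.mem_iSup.mp (hU i ▸ hi : x ∈ ⨆ j, (U i j).1)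
  exact ⟨V i, U i j, hj, hle i j, H i j⟩

end AlgebraicGeometry.HasRingHomProperty

/-- Being of finite expansion on ring sections can be checked on affine open covers:
if there is an affine open cover `V i` of `Y` and affine open covers `U i j` of each
`f ⁻¹ᵁ V i` such that the induced ring maps are of finite expansion, then the induced ring
map on any pair of affine opens `U ≤ f ⁻¹ᵁ V` is of finite expansion. -/
theorem finiteExpansion_of_affine_cover {X Y : Scheme} (f : X ⟶ Y)
    {ι : Type*} (V : ι → Y.affineOpens) (hV : ⨆ i, (V i).1 = ⊤)
    {κ : ι → Type*} (U : ∀ i, κ i → X.affineOpens)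
    (hle : ∀ i j, (U i j).1 ≤ f ⁻¹ᵁ (V i).1)
    (hU : ∀ i, ⨆ j, (U i j).1 = f ⁻¹ᵁ (V i).1)
    (H : ∀ i j, (f.appLE (V i) (U i j) (hle i j)).hom.FiniteExpansion) :
    ∀ (V' : Y.affineOpens) (U' : X.affineOpens) (e : U'.1 ≤ f ⁻¹ᵁ V'.1),
      (f.appLE V' U' e).hom.FiniteExpansion :=
  HasRingHomProperty.appLE (affineLocally @RingHom.FiniteExpansion) f <|
    HasRingHomProperty.of_iSup_affineOpens_eq_top
      RingHom.finiteExpansion_stableUnderCompositionWithLocalizationAway.left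
      f V hV U hle hU H
end

section
/- Let k be a field, A a k-algebra of finite expansion, and p a prime ideal of A. Then p is a maximal ideal of A if and only if the residue field κ(p) = Frac(A/p) is an algebraic field extension of k. -/
namespace Algebra.FiniteExpansion

theorem of_surjective {R A B : Type*} [CommRing R] [CommRing A] [CommRing B] [Algebra R A]
    [Algebra R B] (hA : FiniteExpansion R A) (f : A →ₐ[R] B) (hf : Function.Surjective f) :
    FiniteExpansion R B := by
  classical
  obtain ⟨s, hs⟩ := hA
  refine ⟨s.image f, ⟨fun b => ?_⟩⟩
  obtain ⟨a, rfl⟩ := hf b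
  let φ : adjoin R (s : Set A) →ₐ[R] adjoin R ((s.image f : Finset B) : Set B) :=
    (f.domRestrict _).codRestrict _ fun x => by
      rw [Finset.coe_image, ← AlgHom.map_adjoin]
      exact Subalgebra.mem_map.mpr ⟨x, x.2, rfl⟩
  exact (hs.isIntegral a).map_of_comp_eq φ.toRingHom f.toRingHom rfl

theorem isAlgebraic {k K : Type*} [Field k] [Field K] [Algebra k K]
    (hK : FiniteExpansion k K) : Algebra.IsAlgebraic k K := by
  obtain ⟨s, hs⟩ := hK
  let B := adjoin k (s : Set K)
  have hB : IsField B := isField_of_isIntegral_of_isField Subtype.val_injective (Field.toIsField K)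
  let := hB.toField
  have : FiniteType k B := (Subalgebra.fg_iff_finiteType _).mp (Subalgebra.fg_adjoin_finset _)
  have : Module.Finite k B := finite_of_finite_type_of_isJacobsonRing k B
  exact .trans k B K

end Algebra.FiniteExpansion

theorem Ideal.isMaximal_iff_isAlgebraic_quotient {k A : Type*} [Field k] [CommRing A]
    [Algebra k A] (hA : Algebra.FiniteExpansion k A) (p : Ideal A) [p.IsPrime] :
    p.IsMaximal ↔ Algebra.IsAlgebraic k (A ⧸ p) := by
  constructor
  · intro hp
    let := Ideal.Quotient.field p
    exact (hA.of_surjective _ (Ideal.Quotient.mkₐ_surjective k p)).isAlgebraic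
  · intro _
    exact Ideal.Quotient.maximal_of_isField p
      (isField_of_isIntegral_of_isField' (Field.toIsField k))

/-- Let `A` be an algebra of finite expansion over a field `k`. A prime `p` of `A` is maximal
iff the residue field `κ(p) = Frac(A ⧸ p)` is an algebraic field extension of `k`. -/
theorem Ideal.isMaximal_iff_residueField_isAlgebraic (k A : Type*) [Field k] [CommRing A]
    [Algebra k A] (hA : Algebra.FiniteExpansion k A) (p : Ideal A) [p.IsPrime] :
    p.IsMaximal ↔ Algebra.IsAlgebraic k (FractionRing (A ⧸ p)) := by
  rw [p.isMaximal_iff_isAlgebraic_quotient hA,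
    IsFractionRing.isAlgebraic_iff' k (A ⧸ p) (FractionRing (A ⧸ p))]
end

section
/- Let k be a field and let A be a field which is a k-algebra of finite expansion. Then A is algebraic over k. -/
/-!
If the field `A` is integral over a finitely generated `k`-subalgebra `B`, then `B` is itself a
field, as a domain over which a field is integral is a field. By Zariski's lemma
a field finitely generated as a `k`-algebra is finite over `k`, so `A/B/k` is a tower of
algebraic extensions.
-/

theorem Subalgebra.isField_of_isIntegral {k A : Type*} [CommRing k] [Field A] [Algebra k A]
    (B : Subalgebra k A) [Algebra.IsIntegral B A] : IsField B :=
  isField_of_isIntegral_of_isField Subtype.val_injective (Field.toIsField A)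

theorem Algebra.IsAlgebraic.of_isIntegral_of_fg {k A : Type*} [Field k] [Field A] [Algebra k A]
    (B : Subalgebra k A) (hB : B.FG) [Algebra.IsIntegral B A] : Algebra.IsAlgebraic k A := by
  let : Field B := B.isField_of_isIntegral.toField
  have : Algebra.FiniteType k B := B.fg_iff_finiteType.mp hB
  have : Module.Finite k B := finite_of_finite_type_of_isJacobsonRing k B
  exact Algebra.IsAlgebraic.trans k B A

/-- A field which is an algebra of finite expansion over a field `k` is algebraic over `k`. -/
theorem Algebra.IsAlgebraic.of_finiteExpansion (k A : Type*) [Field k] [Field A] [Algebra k A]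
    (h : Algebra.FiniteExpansion k A) : Algebra.IsAlgebraic k A := by
  obtain ⟨s, hs⟩ := h
  exact .of_isIntegral_of_fg _ (Subalgebra.fg_adjoin_finset s)
end

section
/- Let R be a Jacobson commutative ring and let A be an R-algebra of finite expansion. Then A is a Jacobson ring. -/
/-- An algebra of finite expansion over a Jacobson ring is Jacobson. -/
theorem IsJacobsonRing.of_finiteExpansion (R A : Type*) [CommRing R] [CommRing A] [Algebra R A]
    [IsJacobsonRing R] (h : Algebra.FiniteExpansion R A) : IsJacobsonRing A := by
  obtain ⟨s, hs⟩ := h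
  have hft : Algebra.FiniteType R (Algebra.adjoin R (s : Set A)) :=
    (Subalgebra.fg_iff_finiteType _).mp ⟨s, rfl⟩
  have : IsJacobsonRing (Algebra.adjoin R (s : Set A)) := isJacobsonRing_of_finiteType (A := R)
  exact isJacobsonRing_of_isIntegral (R := Algebra.adjoin R (s : Set A))
end

section
/- Let k be a field and A a k-algebra of finite expansion. Then the following are equivalent: (a) Spec A is totally disconnected; (b) every prime ideal of A is maximal; (c) for every prime p of A, the residue field κ(p) is an algebraic field extension of k. -/
/-!
Spec A is T1 when totally disconnected, and its closed points are the maximal ideals: (a) ⇒ (b).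
If m is maximal, A ⧸ m is integral over the image B ⧸ (m ∩ B) of a finitely generated
k-subalgebra B; that image is a field, hence finite over k by Zariski's lemma: (b) ⇒ (c).
Conversely (c) makes A integral over k, since a non-integral x would give a prime avoiding all
monic values f(x). Over a field each x then satisfies x ^ m * g(x) = 0 with x, g(x) coprime,
so V(x) is clopen with complement V(g(x)), and such clopens separate the points of Spec A.
-/

open Polynomial

namespace PrimeSpectrum

variable {R : Type*} [CommRing R]

theorem compl_zeroLocus_singleton_of_isCoprime {x y : R} (hxy : IsCoprime x y) {m : ℕ}
    (h : x ^ m * y = 0) : (zeroLocus {x})ᶜ = zeroLocus {y} := by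
  ext P
  simp only [Set.mem_compl_iff, mem_zeroLocus, Set.singleton_subset_iff, SetLike.mem_coe]
  constructor
  · intro hx
    have : x ^ m * y ∈ P.asIdeal := h ▸ P.asIdeal.zero_mem
    exact (P.isPrime.mem_or_mem this).resolve_left fun hxm ↦ hx (P.isPrime.mem_of_pow_mem m hxm)
  · intro hy hx
    obtain ⟨a, b, hab⟩ := hxy
    exact P.isPrime.ne_top <| (Ideal.eq_top_iff_one _).mpr <|
      hab ▸ P.asIdeal.add_mem (P.asIdeal.mul_mem_left a hx) (P.asIdeal.mul_mem_left b hy)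

theorem isClopen_zeroLocus_singleton_of_isCoprime {x y : R} (hxy : IsCoprime x y) {m : ℕ}
    (h : x ^ m * y = 0) : IsClopen (zeroLocus {x}) :=
  ⟨isClosed_zeroLocus _, by
    rw [← isClosed_compl_iff, compl_zeroLocus_singleton_of_isCoprime hxy h]
    exact isClosed_zeroLocus _⟩

theorem totallySeparatedSpace_of_isClopen_zeroLocus
    (h : ∀ x : R, IsClopen (zeroLocus {x})) : TotallySeparatedSpace (PrimeSpectrum R) := by
  rw [totallySeparatedSpace_iff_exists_isClopen]
  intro P Q hPQ
  simp only [Set.mem_compl_iff]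
  by_cases hle : P.asIdeal ≤ Q.asIdeal
  · obtain ⟨x, hxQ, hxP⟩ := SetLike.not_le_iff_exists.mp
      fun hge ↦ hPQ (PrimeSpectrum.ext (le_antisymm hle hge))
    refine ⟨(zeroLocus {x})ᶜ, (h x).compl, ?_, ?_⟩ <;> simpa [mem_zeroLocus]
  · obtain ⟨x, hxP, hxQ⟩ := SetLike.not_le_iff_exists.mp hle
    exact ⟨zeroLocus {x}, h x, by simpa [mem_zeroLocus], by simpa [mem_zeroLocus]⟩

end PrimeSpectrum

theorem IsIntegral.exists_isCoprime_pow_mul_eq_zero {k A : Type*} [Field k] [CommRing A]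
    [Algebra k A] {x : A} (hx : IsIntegral k x) :
    ∃ (m : ℕ) (y : A), IsCoprime x y ∧ x ^ m * y = 0 := by
  obtain ⟨f, hfm, hf⟩ := hx
  obtain ⟨g, hfg, hXg⟩ := f.exists_eq_pow_rootMultiplicity_mul_and_not_dvd hfm.ne_zero 0
  rw [map_zero, sub_zero] at hfg hXg
  refine ⟨f.rootMultiplicity 0, aeval x g, ?_, ?_⟩
  · simpa using ((irreducible_X.coprime_iff_not_dvd).mpr hXg).map (aeval x).toRingHom
  · rwa [← aeval_def, hfg, map_mul, map_pow, aeval_X] at hf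

theorem Algebra.IsIntegral.totallySeparatedSpace_primeSpectrum (k A : Type*) [Field k]
    [CommRing A] [Algebra k A] [Algebra.IsIntegral k A] :
    TotallySeparatedSpace (PrimeSpectrum A) :=
  PrimeSpectrum.totallySeparatedSpace_of_isClopen_zeroLocus fun x ↦
    have ⟨_, _, hxy, h⟩ :=
      (Algebra.IsIntegral.isIntegral (R := k) x).exists_isCoprime_pow_mul_eq_zero
    PrimeSpectrum.isClopen_zeroLocus_singleton_of_isCoprime hxy h

theorem isIntegral_of_forall_isIntegral_quotient {R A : Type*} [CommRing R] [CommRing A]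
    [Algebra R A] {x : A} (h : ∀ p : Ideal A, p.IsPrime → IsIntegral R (Ideal.Quotient.mk p x)) :
    IsIntegral R x := by
  by_contra hx
  let S : Submonoid A :=
    { carrier := aeval x '' {f : R[X] | f.Monic}
      one_mem' := ⟨1, monic_one, map_one _⟩
      mul_mem' := by
        rintro _ _ ⟨f, hf, rfl⟩ ⟨g, hg, rfl⟩
        exact ⟨f * g, hf.mul hg, map_mul _ _ _⟩ }
  have hS : Disjoint ((⊥ : Ideal A) : Set A) S := by
    rw [Set.disjoint_left]
    rintro _ h0 ⟨f, hf, rfl⟩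
    exact hx ⟨f, hf, h0⟩
  obtain ⟨p, hp, -, hpS⟩ := Ideal.exists_le_prime_disjoint ⊥ S hS
  obtain ⟨f, hf, hfx⟩ := h p hp
  have : aeval x f ∈ p := by
    rw [← Ideal.Quotient.eq_zero_iff_mem, ← Ideal.Quotient.mkₐ_eq_mk R, ← aeval_algHom_apply]
    exact hfx
  exact Set.disjoint_left.mp hpS this ⟨f, hf, rfl⟩

theorem isIntegral_quotient_of_isIntegral_of_finiteType {R B A : Type*} [CommRing R]
    [IsJacobsonRing R] [CommRing B] [CommRing A] [Algebra R B] [Algebra R A] [Algebra B A]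
    [IsScalarTower R B A] [Algebra.FiniteType R B] [Algebra.IsIntegral B A]
    (m : Ideal A) [m.IsMaximal] : Algebra.IsIntegral R (A ⧸ m) := by
  let := Ideal.Quotient.field (m.under B)
  have : Module.Finite R (B ⧸ m.under B) := finite_of_finite_type_of_isJacobsonRing R _
  exact Algebra.IsIntegral.trans (B ⧸ m.under B)

theorem Algebra.FiniteExpansion.isIntegral_quotient {k A : Type*} [Field k] [CommRing A]
    [Algebra k A] (hA : Algebra.FiniteExpansion k A) (m : Ideal A) [m.IsMaximal] :
    Algebra.IsIntegral k (A ⧸ m) := by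
  obtain ⟨s, hs⟩ := hA
  have : Algebra.FiniteType k (Algebra.adjoin k (s : Set A)) :=
    (Subalgebra.fg_iff_finiteType _).mp (Subalgebra.fg_adjoin_finset s)
  exact isIntegral_quotient_of_isIntegral_of_finiteType (B := Algebra.adjoin k (s : Set A)) m

/-- For an algebra `A` of finite expansion over a field `k`, the following are equivalent:
(a) `Spec A` is totally disconnected; (b) every prime of `A` is maximal; (c) every residue
field `κ(p) = Frac(A ⧸ p)` is an algebraic field extension of `k`. -/
theorem quasiProfinite_tfae_over_field (k A : Type*) [Field k] [CommRing A] [Algebra k A]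
    (hA : Algebra.FiniteExpansion k A) :
    List.TFAE [
      TotallyDisconnectedSpace (PrimeSpectrum A),
      ∀ p : Ideal A, p.IsPrime → p.IsMaximal,
      ∀ p : Ideal A, p.IsPrime → Algebra.IsAlgebraic k (FractionRing (A ⧸ p))] := by
  have residue_iff (p : Ideal A) [p.IsPrime] :
      Algebra.IsAlgebraic k (FractionRing (A ⧸ p)) ↔ Algebra.IsIntegral k (A ⧸ p) := by
    rw [← IsFractionRing.isAlgebraic_iff' k (A ⧸ p), Algebra.isAlgebraic_iff_isIntegral]
  tfae_have 1 → 2 := fun _ p hp ↦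
    (PrimeSpectrum.isClosed_singleton_iff_isMaximal ⟨p, hp⟩).mp isClosed_singleton
  tfae_have 2 → 3 := fun h p hp ↦
    have := h p hp
    (residue_iff p).mpr (hA.isIntegral_quotient p)
  tfae_have 3 → 1 := fun h ↦
    have : Algebra.IsIntegral k A := ⟨fun x ↦ isIntegral_of_forall_isIntegral_quotient fun p hp ↦
      ((residue_iff p).mp (h p hp)).isIntegral _⟩
    have := Algebra.IsIntegral.totallySeparatedSpace_primeSpectrum k A
    inferInstance
  tfae_finish
end

section
/- Let k be a field, A a k-algebra of finite expansion, and p a prime ideal of A, regarded as a point of Spec A. Then the following are equivalent: (a) the connected component of p in Spec A is the singleton {p} (p is quasi-isolated); (b) the singleton {p} is an irreducible component of Spec A; (c) the local ring A_p (the localization of A at p) is integral over k. -/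
open PrimeSpectrum

section Integrality

variable {k : Type*} [Field k]

theorem Algebra.IsIntegral.of_isNilpotent_of_map_eq_zero {R S : Type*} [CommRing R]
    [CommRing S] [Algebra k R] [Algebra k S] [Algebra.IsIntegral k S] (f : R →ₐ[k] S)
    (hf : ∀ x, f x = 0 → IsNilpotent x) : Algebra.IsIntegral k R := by
  refine ⟨fun y => ?_⟩
  obtain ⟨P, hP, hPy⟩ := Algebra.IsIntegral.isIntegral (R := k) (f y)
  rw [← Polynomial.aeval_def, Polynomial.aeval_algHom_apply] at hPy
  obtain ⟨n, hn⟩ := hf _ hPy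
  exact ⟨P ^ n, hP.pow n, by rw [← Polynomial.aeval_def, map_pow, hn]⟩

theorem Algebra.IsIntegral.quotient_of_ker_le {B L : Type*} [CommRing B] [CommRing L]
    [Algebra k B] [Algebra k L] [Algebra.IsIntegral k L] (f : B →ₐ[k] L) {J : Ideal B}
    (hJ : RingHom.ker f ≤ J) : Algebra.IsIntegral k (B ⧸ J) :=
  have := Algebra.IsIntegral.of_injective _ (Ideal.kerLiftAlg_injective f)
  Algebra.IsIntegral.of_surjective (Ideal.Quotient.factorₐ k hJ)
    (Ideal.Quotient.factor_surjective hJ)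

theorem IsIntegral.exists_pow_eq_mul_pow_succ {R : Type*} [CommRing R] [Algebra k R] {x : R}
    (hx : IsIntegral k x) : ∃ (n : ℕ) (t : R), x ^ n = t * x ^ (n + 1) := by
  have : Module.Finite k (Algebra.adjoin k {x}) :=
    ⟨(Subalgebra.toSubmodule _).fg_top.mpr hx.fg_adjoin_singleton⟩
  have : IsArtinianRing (Algebra.adjoin k {x}) := isArtinian_of_tower k inferInstance
  let y : Algebra.adjoin k {x} := ⟨x, Algebra.self_mem_adjoin_singleton k x⟩
  obtain ⟨n, t, h⟩ := IsArtinian.exists_pow_succ_smul_dvd y (1 : Algebra.adjoin k {x})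
  refine ⟨n, t, ?_⟩
  have := congrArg Subtype.val h
  simp only [smul_eq_mul, mul_one, Subalgebra.coe_mul, Subalgebra.coe_pow] at this
  rw [← this, mul_comm]

end Integrality

theorem Ideal.FG.exists_notMem_mul_eq_zero_of_le_ker {A : Type*} [CommRing A] {I : Ideal A}
    (hI : I.FG) (p : PrimeSpectrum A)
    (h : I ≤ RingHom.ker (algebraMap A (Localization.AtPrime p.asIdeal))) :
    ∃ s ∉ p.asIdeal, ∀ x ∈ I, s * x = 0 := by
  have : Module.Finite A I := Module.Finite.iff_fg.mpr hI
  have hp : p ∉ Module.support A I := Module.notMem_support_iff'.mpr fun ⟨x, hx⟩ => by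
    obtain ⟨⟨r, hr⟩, hrx⟩ :=
      (IsLocalization.map_eq_zero_iff p.asIdeal.primeCompl _ x).mp (h hx)
    exact ⟨r, hr, Subtype.ext hrx⟩
  rw [Module.mem_support_iff_of_finite, SetLike.not_le_iff_exists] at hp
  obtain ⟨s, hs, hsp⟩ := hp
  exact ⟨s, hsp, fun x hx => congrArg Subtype.val (Module.mem_annihilator.mp hs ⟨x, hx⟩)⟩

namespace PrimeSpectrum

section IntegralOverField

variable (k : Type*) {R : Type*} [Field k] [CommRing R] [Algebra k R]

theorem exists_isIdempotentElem_basicOpen_eq [Algebra.IsIntegral k R] (x : R) :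
    ∃ e : R, IsIdempotentElem e ∧ basicOpen e = basicOpen x := by
  obtain ⟨n, t, h⟩ := (Algebra.IsIntegral.isIntegral (R := k) x).exists_pow_eq_mul_pow_succ
  have h' : x ^ (n + 1) = t * x ^ (n + 2) := by
    rw [pow_succ, h]; ring
  have hfix : ∀ j : ℕ, x ^ (n + 1) = (t * x) ^ j * x ^ (n + 1) := by
    intro j
    induction j with
    | zero => simp
    | succ j ih =>
      calc x ^ (n + 1) = (t * x) ^ j * (t * x ^ (n + 2)) := by rw [← h', ← ih]
        _ = (t * x) ^ (j + 1) * x ^ (n + 1) := by ring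
  refine ⟨(t * x) ^ (n + 1), ?_, le_antisymm ?_ ?_⟩
  · calc (t * x) ^ (n + 1) * (t * x) ^ (n + 1)
        = t ^ (n + 1) * ((t * x) ^ (n + 1) * x ^ (n + 1)) := by ring
      _ = (t * x) ^ (n + 1) := by rw [← hfix, mul_pow]
  · rw [mul_pow, ← basicOpen_pow x (n + 1) n.succ_pos]
    exact basicOpen_mul_le_right _ _
  · rw [← basicOpen_pow x (n + 1) n.succ_pos, hfix (n + 1)]
    exact basicOpen_mul_le_left _ _

theorem isClopen_basicOpen_of_isIntegral [Algebra.IsIntegral k R] (x : R) :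
    IsClopen (basicOpen x : Set (PrimeSpectrum R)) := by
  obtain ⟨e, he, hex⟩ := exists_isIdempotentElem_basicOpen_eq k x
  exact isClopen_iff.mpr ⟨e, he, by rw [hex]⟩

theorem totallySeparatedSpace_of_isIntegral [Algebra.IsIntegral k R] :
    TotallySeparatedSpace (PrimeSpectrum R) := by
  have separate : ∀ P Q : PrimeSpectrum R, ¬ Q.asIdeal ≤ P.asIdeal →
      ∃ U : Set (PrimeSpectrum R), IsClopen U ∧ P ∈ U ∧ Q ∉ U := by
    intro P Q hQP
    obtain ⟨x, hxQ, hxP⟩ := SetLike.not_le_iff_exists.mp hQP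
    exact ⟨basicOpen x, isClopen_basicOpen_of_isIntegral k x, hxP, fun h => h hxQ⟩
  refine totallySeparatedSpace_iff_exists_isClopen.mpr fun P Q hPQ => ?_
  by_cases hQP : Q.asIdeal ≤ P.asIdeal
  · obtain ⟨U, hU, hQU, hPU⟩ := separate Q P fun hPQ' =>
      hPQ (PrimeSpectrum.ext (le_antisymm hPQ' hQP))
    exact ⟨Uᶜ, hU.compl, hPU, fun h => h hQU⟩
  · exact separate P Q hQP

end IntegralOverField

variable {A : Type*} [CommRing A]

theorem connectedComponent_eq_singleton_of_isIntegral_quotient (k : Type*) [Field k]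
    [Algebra k A] {I : Ideal A} [Algebra.IsIntegral k (A ⧸ I)] {s : A}
    (hs : ∀ x ∈ I, s * x = 0) {p : PrimeSpectrum A} (hp : s ∉ p.asIdeal) :
    connectedComponent p = {p} := by
  have := totallySeparatedSpace_of_isIntegral k (R := A ⧸ I)
  let ι := comap (Ideal.Quotient.mk I)
  have hι : Topology.IsClosedEmbedding ι :=
    isClosedEmbedding_comap_of_surjective _ _ Ideal.Quotient.mk_surjective
  have hU : (basicOpen s : Set (PrimeSpectrum A)) ⊆ Set.range ι := by
    rw [range_comap_of_surjective _ _ Ideal.Quotient.mk_surjective, Ideal.mk_ker]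
    intro q hq x hx
    exact (q.isPrime.mem_or_mem (hs x hx ▸ q.asIdeal.zero_mem)).resolve_left hq
  have hclopen : IsClopen (basicOpen s : Set (PrimeSpectrum A)) := by
    refine ⟨?_, (basicOpen s).isOpen⟩
    rw [← Set.image_preimage_eq_of_subset hU]
    exact hι.isClosedMap _ (isClopen_basicOpen_of_isIntegral k (Ideal.Quotient.mk I s)).isClosed
  have hsub : connectedComponent p ⊆ Set.range ι :=
    (hclopen.connectedComponent_subset hp).trans hU
  exact ((hι.isEmbedding.isTotallyDisconnected_range.mpr inferInstance) _ hsub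
    isPreconnected_connectedComponent).eq_singleton_of_mem mem_connectedComponent

end PrimeSpectrum

theorem mem_irreducibleComponents_of_connectedComponent_eq_singleton {X : Type*}
    [TopologicalSpace X] {x : X} (h : connectedComponent x = {x}) :
    {x} ∈ irreducibleComponents X :=
  ⟨isIrreducible_singleton, fun _ ht hxt =>
    h ▸ ht.2.isPreconnected.subset_connectedComponent (hxt rfl)⟩

section IntegralExtension

variable (k : Type*) {A : Type*} [Field k] [CommRing A] [Algebra k A]
  (B : Type*) [CommRing B] [Algebra k B] [Algebra B A] [IsScalarTower k B A]
  [Algebra.IsIntegral B A]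

theorem isIntegral_localization_of_mem_irreducibleComponents [Algebra.FiniteType k B]
    {p : PrimeSpectrum A} (hp : {p} ∈ irreducibleComponents (PrimeSpectrum A)) :
    Algebra.IsIntegral k (Localization.AtPrime p.asIdeal) := by
  have hclosed : IsClosed {p} := isClosed_of_mem_irreducibleComponents _ hp
  have : p.asIdeal.IsMaximal := (isClosed_singleton_iff_isMaximal p).mp hclosed
  have hmin : p.asIdeal ∈ minimalPrimes A := by
    rw [← vanishingIdeal_singleton, vanishingIdeal_mem_minimalPrimes, hclosed.closure_eq]
    exact hp
  have : Ring.KrullDimLE 0 (Localization.AtPrime p.asIdeal) :=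
    Ring.KrullDimLE.of_isLocalization _ hmin _
  have : Algebra.IsIntegral k (A ⧸ p.asIdeal) := by
    have := Ideal.isMaximal_comap_of_isIntegral_of_isMaximal (R := B) p.asIdeal
    let := Ideal.Quotient.field (p.asIdeal.comap (algebraMap B A))
    have := finite_of_finite_type_of_isJacobsonRing k (B ⧸ p.asIdeal.comap (algebraMap B A))
    exact Algebra.IsIntegral.trans (B ⧸ p.asIdeal.comap (algebraMap B A))
  have : Algebra.IsIntegral k p.asIdeal.ResidueField :=
    Algebra.IsIntegral.of_surjective (IsScalarTower.toAlgHom k (A ⧸ p.asIdeal) _)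
      p.asIdeal.bijective_algebraMap_quotient_residueField.surjective
  exact Algebra.IsIntegral.of_isNilpotent_of_map_eq_zero
    (IsScalarTower.toAlgHom k _ p.asIdeal.ResidueField) fun x hx =>
      Ring.KrullDimLE.isNilpotent_iff_mem_maximalIdeal.mpr
        ((IsLocalRing.residue_eq_zero_iff x).mp hx)

theorem connectedComponent_eq_singleton_of_isIntegral_localization [IsNoetherianRing B]
    (p : PrimeSpectrum A) [Algebra.IsIntegral k (Localization.AtPrime p.asIdeal)] :
    connectedComponent p = {p} := by
  let f : B →ₐ[k] Localization.AtPrime p.asIdeal :=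
    (IsScalarTower.toAlgHom k A _).comp (IsScalarTower.toAlgHom k B A)
  let I : Ideal A := (RingHom.ker f).map (algebraMap B A)
  have hI : I ≤ RingHom.ker (algebraMap A (Localization.AtPrime p.asIdeal)) :=
    Ideal.map_le_iff_le_comap.mpr fun b hb => RingHom.mem_ker.mpr (RingHom.mem_ker.mp hb)
  have hIfg : I.FG := Ideal.FG.map (IsNoetherian.noetherian _) (algebraMap B A)
  obtain ⟨s, hsp, hs⟩ := hIfg.exists_notMem_mul_eq_zero_of_le_ker p hI
  have : Algebra.IsIntegral k (B ⧸ I.comap (algebraMap B A)) :=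
    Algebra.IsIntegral.quotient_of_ker_le f Ideal.le_comap_map
  have : Algebra.IsIntegral k (A ⧸ I) := Algebra.IsIntegral.trans (B ⧸ I.comap (algebraMap B A))
  exact connectedComponent_eq_singleton_of_isIntegral_quotient k hs hsp

end IntegralExtension

/-- For a point `p` of the spectrum of an algebra `A` of finite expansion over a field `k`,
the following are equivalent: (a) `p` is quasi-isolated, i.e. its connected component in
`Spec A` is the singleton `{p}`; (b) `{p}` is an irreducible component of `Spec A`; (c) the
local ring `A_p` is integral over `k`. -/
theorem quasiIsolated_tfae (k A : Type*) [Field k] [CommRing A] [Algebra k A]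
    (hA : Algebra.FiniteExpansion k A) (p : PrimeSpectrum A) :
    List.TFAE [
      connectedComponent p = {p},
      ({p} : Set (PrimeSpectrum A)) ∈ irreducibleComponents (PrimeSpectrum A),
      Algebra.IsIntegral k (Localization.AtPrime p.asIdeal)] := by
  obtain ⟨s, hs⟩ := hA
  let B := Algebra.adjoin k (s : Set A)
  have : Algebra.FiniteType k B := (Subalgebra.fg_iff_finiteType B).mp ⟨s, rfl⟩
  have : IsNoetherianRing B := Algebra.FiniteType.isNoetherianRing k B
  tfae_have 1 → 2 := mem_irreducibleComponents_of_connectedComponent_eq_singleton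
  tfae_have 2 → 3 := isIntegral_localization_of_mem_irreducibleComponents k B
  tfae_have 3 → 1 := fun _ => connectedComponent_eq_singleton_of_isIntegral_localization k B p
  tfae_finish
end

section
/- Let R be a commutative ring, A an R-algebra, and f₁, …, f_m elements of A generating the unit ideal of A. Then A is of finite expansion over R if and only if for every i the localization A_{f_i} of A at f_i is of finite expansion over R. -/
/-!
Finite expansion is transitive (a tower argument for integrality), and `A_f` is of finite type
over `A`; this gives the forward direction. Conversely, if `A_{f i}` is integral over
`R[t_i]`, put into a finitely generated `C ⊆ A` the numerators of the elements of `t_i`,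
the `f i`, and coefficients of a relation `∑ c i * f i = 1`. Then the `f i` still generate
the unit ideal of `C`, each `A_{f i}` is integral over the image of `C_{f i}`, and integrality
of `C → A` is local on `Spec C`.
-/

theorem IsIntegral.of_subalgebra_subset {R₁ R₂ B : Type*} [CommRing R₁] [CommRing R₂] [CommRing B]
    [Algebra R₁ B] [Algebra R₂ B] {P : Subalgebra R₁ B} {Q : Subalgebra R₂ B}
    (hPQ : (P : Set B) ⊆ Q) {x : B} (hx : IsIntegral P x) : IsIntegral Q x :=
  hx.map_of_comp_eq ((algebraMap P B).codRestrict Q fun p ↦ hPQ p.2) (RingHom.id B) rfl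

theorem IsIntegral.map_of_map_le {R A B : Type*} [CommRing R] [CommRing A] [CommRing B]
    [Algebra R A] [Algebra R B] (g : A →ₐ[R] B) {P : Subalgebra R A} {Q : Subalgebra R B}
    (hPQ : P.map g ≤ Q) {x : A} (hx : IsIntegral P x) : IsIntegral Q (g x) :=
  hx.map_of_comp_eq ((g.comp P.val).codRestrict Q fun p ↦ hPQ ⟨p, p.2, rfl⟩).toRingHom
    (g : A →+* B) rfl

theorem AlgHom.isIntegral_of_isIntegral_range {R A B : Type*} [CommRing R] [CommRing A]
    [CommRing B] [Algebra R A] [Algebra R B] (φ : A →ₐ[R] B) [Algebra.IsIntegral φ.range B] :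
    φ.toRingHom.IsIntegral :=
  RingHom.IsIntegral.trans φ.rangeRestrict.toRingHom (algebraMap φ.range B)
    (RingHom.isIntegral_of_surjective _ φ.rangeRestrict_surjective)
    (algebraMap_isIntegral_iff.mpr ‹_›)

theorem Localization.mem_range_awayMapₐ {R A B : Type*} [CommRing R] [CommRing A] [CommRing B]
    [Algebra R A] [Algebra R B] (φ : A →ₐ[R] B) (a : A) (y : Localization.Away (φ a))
    (hy : (IsLocalization.Away.sec (φ a) y).1 ∈ φ.range) : y ∈ (awayMapₐ φ a).range := by
  obtain ⟨b, hb⟩ := hy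
  refine ⟨IsLocalization.mk' (Localization.Away a) b
    ⟨a ^ (IsLocalization.Away.sec (φ a) y).2, pow_mem (Submonoid.mem_powers a) _⟩, ?_⟩
  rw [AlgHom.toRingHom_eq_coe, RingHom.coe_coe, IsLocalization.Away.mapₐ_apply,
    IsLocalization.Away.map, IsLocalization.map_mk', eq_comm, IsLocalization.eq_mk'_iff_mul_eq]
  simpa [← hb] using IsLocalization.Away.sec_spec (φ a) y

theorem Subalgebra.isIntegral_of_span_eq_top {R A : Type*} [CommRing R] [CommRing A]
    [Algebra R A] (C : Subalgebra R A) (s : Set C) (hs : Ideal.span s = ⊤)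
    (h : ∀ r ∈ s, Algebra.IsIntegral (Localization.awayMapₐ C.val r).range
      (Localization.Away (C.val r))) :
    Algebra.IsIntegral C A := by
  rw [← algebraMap_isIntegral_iff]
  refine RingHom.isIntegral_ofLocalizationSpan _ s hs fun r ↦ ?_
  have := h r r.2
  exact (Localization.awayMapₐ C.val r).isIntegral_of_isIntegral_range

namespace Algebra.FiniteExpansion

variable {R A B : Type*} [CommRing R] [CommRing A] [CommRing B] [Algebra R A]

theorem of_finiteType [Algebra.FiniteType R A] : FiniteExpansion R A := by
  obtain ⟨s, hs⟩ := Algebra.FiniteType.out (R := R) (A := A)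
  refine ⟨s, ⟨fun x ↦ ?_⟩⟩
  have hx : x ∈ Algebra.adjoin R (s : Set A) := hs ▸ Algebra.mem_top
  exact isIntegral_algebraMap (x := (⟨x, hx⟩ : Algebra.adjoin R (s : Set A)))

theorem trans [Algebra R B] [Algebra A B] [IsScalarTower R A B] (hA : FiniteExpansion R A)
    (hB : FiniteExpansion A B) : FiniteExpansion R B := by
  classical
  obtain ⟨s, hs⟩ := hA
  obtain ⟨t, ht⟩ := hB
  refine ⟨s.image (algebraMap A B) ∪ t, ⟨fun x ↦ ?_⟩⟩
  set E := Algebra.adjoin R ((s.image (algebraMap A B) ∪ t : Finset B) : Set B)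
  have hsE : (Algebra.adjoin R (s : Set A)).map (IsScalarTower.toAlgHom R A B) ≤ E := by
    rw [AlgHom.map_adjoin]
    exact Algebra.adjoin_mono (by simp)
  have htE : (t : Set B) ⊆ E := fun y hy ↦ Algebra.subset_adjoin (by simp [hy])
  have hD : (Algebra.adjoin A (t : Set B) : Set B) ⊆ integralClosure E B := by
    rw [← Subalgebra.coe_toSubring, Algebra.adjoin_eq_ring_closure]
    refine Subring.closure_le (t := (integralClosure E B).toSubring) |>.mpr
      (Set.union_subset ?_ fun y hy ↦ isIntegral_algebraMap (x := (⟨y, htE hy⟩ : E)))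
    rintro _ ⟨a, rfl⟩
    exact (hs.isIntegral a).map_of_map_le (IsScalarTower.toAlgHom R A B) hsE
  exact isIntegral_trans (A := integralClosure E B) x ((ht.isIntegral x).of_subalgebra_subset hD)

theorem of_span_eq_top {ι : Type*} [Fintype ι] (f : ι → A) (hf : Ideal.span (Set.range f) = ⊤)
    (h : ∀ i, FiniteExpansion R (Localization.Away (f i))) : FiniteExpansion R A := by
  classical
  choose t ht using h
  obtain ⟨c, hc⟩ := Ideal.mem_span_range_iff_exists_fun.mp (hf ▸ Submodule.mem_top (x := (1 : A)))
  let num i (y : Localization.Away (f i)) : A := (IsLocalization.Away.sec (f i) y).1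
  let s : Finset A :=
    Finset.univ.biUnion (fun i ↦ (t i).image (num i)) ∪ Finset.univ.image f ∪ Finset.univ.image c
  set C := Algebra.adjoin R (s : Set A)
  have hfC i : f i ∈ C := Algebra.subset_adjoin (by simp [s])
  have hcC i : c i ∈ C := Algebra.subset_adjoin (by simp [s])
  have hnumC i : ∀ y ∈ t i, num i y ∈ C := fun y hy ↦
    Algebra.subset_adjoin (by simpa [s] using Or.inl ⟨i, y, hy, rfl⟩)
  let f' i : C := ⟨f i, hfC i⟩
  have hf' : Ideal.span (Set.range f') = ⊤ := by
    rw [Ideal.eq_top_iff_one, Ideal.mem_span_range_iff_exists_fun]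
    exact ⟨fun i ↦ ⟨c i, hcC i⟩, Subtype.ext (by simpa using hc)⟩
  refine ⟨s, C.isIntegral_of_span_eq_top _ hf' ?_⟩
  rintro _ ⟨i, rfl⟩
  have hti : Algebra.adjoin R (t i : Set (Localization.Away (f i))) ≤
      (Localization.awayMapₐ C.val (f' i)).range :=
    Algebra.adjoin_le fun y hy ↦
      Localization.mem_range_awayMapₐ C.val (f' i) y ⟨⟨num i y, hnumC i y hy⟩, rfl⟩
  exact ⟨fun x ↦ ((ht i).isIntegral x).of_subalgebra_subset hti⟩

end Algebra.FiniteExpansion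

/-- Finite expansion can be checked on a finite cover of `Spec A` by principal opens:
if `f 0, …, f (m-1)` generate the unit ideal of `A`, then `A` is of finite expansion over
`R` if and only if each localization `A_{f i}` is of finite expansion over `R`. -/
theorem Algebra.FiniteExpansion.iff_localization (R A : Type*) [CommRing R] [CommRing A]
    [Algebra R A] (m : ℕ) (f : Fin m → A) (hf : Ideal.span (Set.range f) = ⊤) :
    Algebra.FiniteExpansion R A ↔
      ∀ i, Algebra.FiniteExpansion R (Localization.Away (f i)) := by
  exact ⟨fun hA _ ↦ hA.trans .of_finiteType, of_span_eq_top f hf⟩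
end

section
/- Let R be a commutative ring, A an R-algebra of finite expansion, and R' any commutative R-algebra. Then R' ⊗_R A is of finite expansion over R'. -/
open TensorProduct in
/-- Finite expansion is stable under base change. -/
theorem Algebra.FiniteExpansion.baseChange (R A R' : Type*) [CommRing R] [CommRing A]
    [CommRing R'] [Algebra R A] [Algebra R R'] (h : Algebra.FiniteExpansion R A) :
    Algebra.FiniteExpansion R' (R' ⊗[R] A) := by
  classical
  obtain ⟨s, hs⟩ := h
  let ι : A →ₐ[R] R' ⊗[R] A := Algebra.TensorProduct.includeRight
  refine ⟨s.image ι, ?_⟩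
  set C := Algebra.adjoin R' ((s.image ι : Finset (R' ⊗[R] A)) : Set (R' ⊗[R] A)) with hC
  have hmem : ∀ b ∈ Algebra.adjoin R (s : Set A), ι b ∈ C := by
    intro b hb
    have : ι b ∈ (Algebra.adjoin R (s : Set A)).map ι := ⟨b, hb, rfl⟩
    have hsub : (Algebra.adjoin R (s : Set A)).map ι ≤ C.restrictScalars R := by
      rw [Subalgebra.map_le]
      rw [Algebra.adjoin_le_iff]
      intro x hx
      show ι x ∈ C
      apply Algebra.subset_adjoin
      simp only [Finset.coe_image, Set.mem_image]
      exact ⟨x, hx, rfl⟩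
    exact hsub this
  -- the ring hom from B := adjoin R s to C
  let B := Algebra.adjoin R (s : Set A)
  let φ : B →+* C := {
    toFun := fun b => ⟨ι b, hmem b b.2⟩
    map_one' := by ext; simp
    map_mul' := by intros; ext; simp
    map_zero' := by ext; simp
    map_add' := by intros; ext; simp }
  have key : ∀ a : A, IsIntegral C (ι a) := by
    intro a
    have ha : IsIntegral B a := hs.isIntegral a
    refine ha.map_of_comp_eq φ (ι : A →+* R' ⊗[R] A) ?_
    ext b
    rfl
  constructor
  intro x
  induction x using TensorProduct.induction_on with
  | zero => exact isIntegral_zero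
  | tmul r a =>
      have h1 : (r ⊗ₜ[R] a : R' ⊗[R] A) =
          (algebraMap R' (R' ⊗[R] A) r) * (ι a) := by
        simp [ι, Algebra.TensorProduct.algebraMap_apply]
      rw [h1]
      have h2 : IsIntegral C (algebraMap R' (R' ⊗[R] A) r) := by
        have : algebraMap R' (R' ⊗[R] A) r ∈ C := C.algebraMap_mem r
        exact ⟨Polynomial.X - Polynomial.C ⟨_, this⟩, Polynomial.monic_X_sub_C _, by simp⟩
      exact h2.mul (key a)
  | add x y hx hy => exact hx.add hy
end

section
/- Let R be a commutative ring, A an R-algebra, and R' a faithfully flat commutative R-algebra. If R' ⊗_R A is of finite expansion over R', then A is of finite expansion over R. -/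
open TensorProduct

theorem Submodule.mem_of_one_tmul_mem_baseChange {R R' M : Type*} [CommRing R] [Ring R']
    [Algebra R R'] [Module.FaithfullyFlat R R'] [AddCommGroup M] [Module R M]
    {p : Submodule R M} {x : M} (hx : (1 : R') ⊗ₜ[R] x ∈ p.baseChange R') : x ∈ p := by
  rwa [← span_singleton_le_iff_mem, ← baseChange_le_iff (A := R'), baseChange_span,
    Set.image_singleton, span_le, Set.singleton_subset_iff]

theorem isIntegral_of_forall_pow_mem_span {R A : Type*} [CommRing R] [CommRing A] [Algebra R A]
    {a : A} (n : ℕ) (h : ∀ k, a ^ k ∈ Submodule.span R ((a ^ ·) '' Set.Iio n)) :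
    IsIntegral R a := by
  refine IsIntegral.of_mem_of_fg (Algebra.adjoin R {a}) ?_ a (Algebra.subset_adjoin rfl)
  convert Submodule.fg_span ((Set.finite_Iio n).image (a ^ ·))
  refine le_antisymm ?_ (Submodule.span_le.2 ?_)
  · rw [Algebra.adjoin_eq_span, Submodule.span_le]
    intro x hx
    obtain ⟨k, rfl⟩ := Submonoid.mem_closure_singleton.1 hx
    exact h k
  · rintro _ ⟨k, -, rfl⟩
    exact (Algebra.adjoin R {a}).pow_mem (Algebra.subset_adjoin rfl) k

namespace Subalgebra

section Semiring

variable {R A R' : Type*} [CommSemiring R] [Semiring A] [CommSemiring R'] [Algebra R A]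
  [Algebra R R']

theorem baseChange_mono {C D : Subalgebra R A} (h : C ≤ D) :
    C.baseChange R' ≤ D.baseChange R' := by
  have : Algebra.TensorProduct.map (AlgHom.id R' R') C.val =
      (Algebra.TensorProduct.map (AlgHom.id R' R') D.val).comp
        (Algebra.TensorProduct.map (AlgHom.id R' R') (inclusion h)) := by
    ext; rfl
  rw [baseChange, baseChange, this]
  exact AlgHom.range_comp_le_range _ _

theorem exists_fg_and_subset_baseChange {s : Set (R' ⊗[R] A)} (hs : s.Finite) :
    ∃ C : Subalgebra R A, C.FG ∧ s ⊆ C.baseChange R' := by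
  induction s, hs using Set.Finite.induction_on with
  | empty => exact ⟨⊥, fg_bot, Set.empty_subset _⟩
  | @insert x s _ _ ih =>
    obtain ⟨C, hC, hsC⟩ := ih
    obtain ⟨D, hD, hxD⟩ := exists_fg_and_mem_baseChange x
    refine ⟨C ⊔ D, hC.sup hD, Set.insert_subset ?_ ?_⟩
    · exact baseChange_mono le_sup_right hxD
    · exact hsC.trans (baseChange_mono le_sup_left)

theorem mul_mem_baseChange_restrictScalars {C : Subalgebra R A} {N : Submodule C A}
    {c y : R' ⊗[R] A} (hc : c ∈ C.baseChange R')
    (hy : y ∈ (N.restrictScalars R).baseChange R') :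
    c * y ∈ (N.restrictScalars R).baseChange R' := by
  obtain ⟨c, rfl⟩ := hc
  obtain ⟨y, rfl⟩ := hy
  induction c using TensorProduct.induction_on with
  | zero => simp
  | add c c' hc hc' => rw [map_add, add_mul]; exact add_mem hc hc'
  | tmul r c =>
    induction y using TensorProduct.induction_on with
    | zero => simp
    | add y y' hy hy' => rw [map_add, mul_add]; exact add_mem hy hy'
    | tmul r' m =>
      change (r ⊗ₜ[R] (c : A)) * (r' ⊗ₜ[R] (m : A)) ∈ _
      rw [Algebra.TensorProduct.tmul_mul_tmul]
      exact Submodule.tmul_mem_baseChange_of_mem _ (N.smul_mem c m.2)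

theorem span_one_tmul_subset_baseChange_span {C : Subalgebra R A} (s : Set A) :
    (Submodule.span (C.baseChange R') ((fun a ↦ (1 : R') ⊗ₜ[R] a) '' s) :
        Set (R' ⊗[R] A)) ⊆ ((Submodule.span C s).restrictScalars R).baseChange R' := by
  intro x hx
  induction hx using Submodule.span_induction with
  | mem x hx =>
    obtain ⟨a, ha, rfl⟩ := hx
    exact Submodule.tmul_mem_baseChange_of_mem _ (Submodule.subset_span ha)
  | zero => exact zero_mem _
  | add x y _ _ hx hy => exact add_mem hx hy
  | smul c x _ hx => exact mul_mem_baseChange_restrictScalars c.2 hx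

end Semiring

open Polynomial in
theorem isIntegral_of_isIntegral_one_tmul {R A R' : Type*} [CommRing R] [CommRing A]
    [CommRing R'] [Algebra R A] [Algebra R R'] [Module.FaithfullyFlat R R']
    {C : Subalgebra R A} {a : A} (ha : IsIntegral (C.baseChange R') ((1 : R') ⊗ₜ[R] a)) :
    IsIntegral C a := by
  classical
  obtain ⟨p, hp, hpa⟩ := ha
  refine isIntegral_of_forall_pow_mem_span p.natDegree fun k ↦ ?_
  apply Submodule.mem_of_one_tmul_mem_baseChange (R' := R')
    (p := (Submodule.span C ((a ^ ·) '' Set.Iio p.natDegree)).restrictScalars R)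
  apply span_one_tmul_subset_baseChange_span
  have hpow : (1 : R') ⊗ₜ[R] (a ^ k) = ((1 : R') ⊗ₜ[R] a) ^ k := by
    rw [Algebra.TensorProduct.tmul_pow, one_pow]
  have hgen : (fun b ↦ (1 : R') ⊗ₜ[R] b) '' ((a ^ ·) '' Set.Iio p.natDegree) =
      ↑(Finset.image (((1 : R') ⊗ₜ[R] a) ^ ·) (Finset.range p.natDegree)) := by
    ext
    simp [Algebra.TensorProduct.tmul_pow]
  rw [hgen, hpow, SetLike.mem_coe,
    Submodule.span_range_natDegree_eq_adjoin hp (by rwa [aeval_def]), mem_toSubmodule]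
  exact pow_mem (Algebra.subset_adjoin (Set.mem_singleton _)) k

end Subalgebra

open TensorProduct in
/-- Finite expansion descends along faithfully flat base change. -/
theorem Algebra.FiniteExpansion.of_faithfullyFlat (R A R' : Type*) [CommRing R] [CommRing A]
    [CommRing R'] [Algebra R A] [Algebra R R'] [Module.FaithfullyFlat R R']
    (h : Algebra.FiniteExpansion R' (R' ⊗[R] A)) : Algebra.FiniteExpansion R A := by
  obtain ⟨s, hs⟩ := h
  obtain ⟨C, ⟨t, rfl⟩, hsC⟩ := Subalgebra.exists_fg_and_subset_baseChange (R := R) s.finite_toSet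
  refine ⟨t, ⟨fun a ↦ Subalgebra.isIntegral_of_isIntegral_one_tmul (R' := R') ?_⟩⟩
  exact (hs.isIntegral _).map_of_comp_eq (Subalgebra.inclusion (Algebra.adjoin_le hsC)).toRingHom
    (RingHom.id _) rfl
end
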